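/- arXiv:2303.01224 — 2 statements merged into one kernel-verified Lean document; each statement's English description precedes it below -/
import Mathlib

section
/- Let S = {x ∈ R^n : H x ≤ h, cᵀ x ≤ c₀} be a full-dimensional simplex, where H ∈ Z^{n×n} is nonsingular. Then there exists a vector t ∈ R^n with t_i > 0 for all i such that c = -Hᵀ t. -/
/-!
Put `t := -(Hᵀ)⁻¹ c`, so that `c = -Hᵀ t` holds by construction. If some `t j ≤ 0`, the
direction `d := -H⁻¹ eⱼ` satisfies `H d = -eⱼ ≤ 0` and `cᵀ d = t j ≤ 0`, so every ray `x + s d`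
(`s ≥ 0`) from a point `x` of `S` stays in `S`; since `d ≠ 0`, this contradicts boundedness.
-/

open Matrix

theorem eq_zero_of_isBounded_of_forall_add_smul_mem {E : Type*} [NormedAddCommGroup E]
    [NormedSpace ℝ E] {S : Set E} (hS : Bornology.IsBounded S) {x d : E}
    (hray : ∀ s : ℝ, 0 ≤ s → x + s • d ∈ S) : d = 0 := by
  obtain ⟨R, hR0, hR⟩ := hS.subset_closedBall_lt 0 x
  by_contra hd
  have hd : 0 < ‖d‖ := norm_pos_iff.mpr hd
  have hs : 0 ≤ (R + 1) / ‖d‖ := by positivity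
  have hmem := hR (hray _ hs)
  rw [Metric.mem_closedBall, dist_eq_norm, add_sub_cancel_left, norm_smul,
    Real.norm_of_nonneg hs, div_mul_cancel₀ _ hd.ne'] at hmem
  linarith

theorem add_smul_mem_setOf_mulVec_le {m n : Type*} [Fintype n] {A : Matrix m n ℝ}
    {b : m → ℝ} {c x d : n → ℝ} {c₀ : ℝ} (hx : A *ᵥ x ≤ b ∧ c ⬝ᵥ x ≤ c₀)
    (hAd : A *ᵥ d ≤ 0) (hcd : c ⬝ᵥ d ≤ 0) {s : ℝ} (hs : 0 ≤ s) :
    A *ᵥ (x + s • d) ≤ b ∧ c ⬝ᵥ (x + s • d) ≤ c₀ := by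
  rw [mulVec_add, mulVec_smul, dotProduct_add, dotProduct_smul]
  exact ⟨add_le_of_le_of_nonpos hx.1 (smul_nonpos_of_nonneg_of_nonpos hs hAd),
    add_le_of_le_of_nonpos hx.2 (smul_nonpos_of_nonneg_of_nonpos hs hcd)⟩

section Invertible

variable {n : Type*} [Fintype n] [DecidableEq n] {A : Matrix n n ℝ}

theorem mulVec_nonsing_inv_mulVec (hA : IsUnit A.det) (v : n → ℝ) :
    A *ᵥ (A⁻¹ *ᵥ v) = v := by
  rw [mulVec_mulVec, mul_nonsing_inv _ hA, one_mulVec]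

theorem dotProduct_neg_nonsing_inv_mulVec_single (c : n → ℝ) (j : n) :
    c ⬝ᵥ -(A⁻¹ *ᵥ Pi.single j 1) = (-Aᵀ⁻¹ *ᵥ c) j := by
  rw [dotProduct_neg, dotProduct_mulVec, dotProduct_single, mul_one, ← transpose_nonsing_inv,
    neg_mulVec, mulVec_transpose, Pi.neg_apply]

theorem neg_transpose_nonsing_inv_mulVec_pos (hA : IsUnit A.det) {b c : n → ℝ} {c₀ : ℝ}
    (hbdd : Bornology.IsBounded {x | A *ᵥ x ≤ b ∧ c ⬝ᵥ x ≤ c₀})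
    (hne : {x | A *ᵥ x ≤ b ∧ c ⬝ᵥ x ≤ c₀}.Nonempty) (j : n) :
    0 < (-Aᵀ⁻¹ *ᵥ c) j := by
  by_contra! htj
  obtain ⟨x, hx⟩ := hne
  set d := -(A⁻¹ *ᵥ Pi.single j 1)
  have hAd : A *ᵥ d = -Pi.single j 1 := by
    rw [mulVec_neg, mulVec_nonsing_inv_mulVec hA]
  have hcd : c ⬝ᵥ d ≤ 0 := (dotProduct_neg_nonsing_inv_mulVec_single c j).trans_le htj
  have hAd_nonpos : A *ᵥ d ≤ 0 := hAd.trans_le (neg_nonpos.mpr (Pi.single_nonneg.mpr zero_le_one))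
  have hd : d = 0 := eq_zero_of_isBounded_of_forall_add_smul_mem hbdd fun _ hs =>
    add_smul_mem_setOf_mulVec_le hx hAd_nonpos hcd hs
  have hAd_j := congrFun hAd j
  simp [hd] at hAd_j

end Invertible

/-- For a bounded full-dimensional simplex `{x : H x ≤ h, cᵀ x ≤ c₀}` with `H`
nonsingular, the last normal vector `c` is a strictly negative combination of
the rows of `H`: `c = -Hᵀ t` with `t > 0` componentwise. -/
theorem simplex_last_row_neg_comb (n : ℕ) (H : Matrix (Fin n) (Fin n) ℤ)
    (h : Fin n → ℤ) (c : Fin n → ℤ) (c₀ : ℤ)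
    (hH : H.det ≠ 0)
    (S : Set (Fin n → ℝ))
    (hS : S = {x : Fin n → ℝ |
      (∀ i, (H.map (Int.cast : ℤ → ℝ)).mulVec x i ≤ (h i : ℝ)) ∧
      (∑ i, (c i : ℝ) * x i) ≤ (c₀ : ℝ)})
    (hbdd : Bornology.IsBounded S)
    (hfulldim : (interior S).Nonempty) :
    ∃ t : Fin n → ℝ, (∀ i, 0 < t i) ∧
      (fun i => (c i : ℝ)) = -(H.map (Int.cast : ℤ → ℝ)).transpose.mulVec t := by
  set A := H.map (Int.cast : ℤ → ℝ)
  have hA : IsUnit A.det := by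
    rw [isUnit_iff_ne_zero, ← Int.cast_det]
    exact_mod_cast hH
  subst hS
  refine ⟨-Aᵀ⁻¹ *ᵥ fun i => (c i : ℝ),
    neg_transpose_nonsing_inv_mulVec_pos hA hbdd (hfulldim.mono interior_subset), ?_⟩
  rw [neg_mulVec, mulVec_neg, neg_neg,
    mulVec_nonsing_inv_mulVec ((det_transpose A).symm ▸ hA)]
end

section
/- Let H = [[I_s, 0],[B, T]] be a block lower-triangular integer n×n matrix where I_s is the s×s identity, T ∈ Z^{k×k} is lower-triangular with T_{ii} ≥ 2 and 0 ≤ T_{ij} < T_{ii} for j < i, and 0 ≤ B_{ij} < T_{ii} for all entries of B. If π is a permutation of the first s rows of H such that the corresponding permuted columns of B are equal to the original columns of B (i.e., π permutes indices with identical columns of B), then there exists a unimodular matrix Q ∈ Z^{n×n} with P_π H = H Q. -/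
/-! Permuting the first `s` rows and columns of `H = [[I, 0], [B, T]]` by `π` fixes `H`,
because conjugating `I` by a permutation gives `I` back and the columns of `B` are
invariant under `π`. Hence permuting only the rows equals permuting the columns by `π⁻¹`,
which is right multiplication by a permutation matrix, of determinant `sign π = ±1`. -/

open Equiv

namespace Matrix

variable {l m n o l' m' n' o' R : Type*}

theorem fromBlocks_submatrix_sumMap (A : Matrix n l R) (B : Matrix n m R) (C : Matrix o l R)
    (D : Matrix o m R) (f : n' → n) (g : o' → o) (h : l' → l) (i : m' → m) :
    (fromBlocks A B C D).submatrix (Sum.map f g) (Sum.map h i) =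
      fromBlocks (A.submatrix f h) (B.submatrix f i) (C.submatrix g h) (D.submatrix g i) := by
  ext (_ | _) (_ | _) <;> rfl

theorem det_permMatrix_eq_one_or_neg_one [DecidableEq n] [Fintype n] [CommRing R]
    (σ : Perm n) : (σ.permMatrix R).det = 1 ∨ (σ.permMatrix R).det = -1 := by
  rw [det_permutation]
  rcases Int.units_eq_one_or (Perm.sign σ) with h | h <;> simp [h]

theorem submatrix_self_id_eq_mul_permMatrix [DecidableEq n] [Fintype n] [NonAssocSemiring R]
    {M : Matrix n n R} (σ : Perm n) (hM : M.submatrix σ σ = M) :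
    M.submatrix σ id = M * σ.permMatrix R := by
  calc M.submatrix σ id = (M.submatrix σ σ).submatrix id σ.symm := by simp
    _ = M * σ.permMatrix R := by rw [hM, PEquiv.mul_toMatrix_toPEquiv]

end Matrix

open Matrix

theorem redundant_row_permutation_general (s k : ℕ)
    (B : Matrix (Fin k) (Fin s) ℤ) (T : Matrix (Fin k) (Fin k) ℤ)
    (H : Matrix (Fin s ⊕ Fin k) (Fin s ⊕ Fin k) ℤ)
    (hH : H = Matrix.fromBlocks 1 0 B T)
    (π : Equiv.Perm (Fin s))
    (hπ : ∀ j : Fin s, (fun i => B i (π j)) = fun i => B i j) :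
    ∃ Q : Matrix (Fin s ⊕ Fin k) (Fin s ⊕ Fin k) ℤ,
      (Q.det = 1 ∨ Q.det = -1) ∧
      H.submatrix (Equiv.sumCongr π (Equiv.refl (Fin k))) id = H * Q := by
  set σ : Perm (Fin s ⊕ Fin k) := Equiv.sumCongr π (Equiv.refl (Fin k))
  have hBπ : B.submatrix id π = B := by
    ext i j
    exact congrFun (hπ j) i
  have hσ : H.submatrix σ σ = H := by
    subst hH
    change (fromBlocks 1 0 B T).submatrix (Sum.map π id) (Sum.map π id) = _
    rw [fromBlocks_submatrix_sumMap, submatrix_one_equiv, submatrix_zero, Pi.zero_apply,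
      Pi.zero_apply, hBπ, submatrix_id_id]
  exact ⟨σ.permMatrix ℤ, det_permMatrix_eq_one_or_neg_one σ,
    submatrix_self_id_eq_mul_permMatrix σ hσ⟩

/-- A permutation of the first `s` rows of `H = [[I, 0], [B, T]]` that permutes
indices corresponding to identical columns of `B` is redundant: it can be
undone by a unimodular column operation, i.e. `P_π H = H Q` for a unimodular
`Q`. -/
theorem redundant_row_permutation (s k : ℕ)
    (B : Matrix (Fin k) (Fin s) ℤ) (T : Matrix (Fin k) (Fin k) ℤ)
    (hlow : ∀ i j : Fin k, i < j → T i j = 0)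
    (hdiag : ∀ i : Fin k, 2 ≤ T i i)
    (hred : ∀ i j : Fin k, j < i → 0 ≤ T i j ∧ T i j < T i i)
    (hB : ∀ i j, 0 ≤ B i j ∧ B i j < T i i)
    (H : Matrix (Fin s ⊕ Fin k) (Fin s ⊕ Fin k) ℤ)
    (hH : H = Matrix.fromBlocks 1 0 B T)
    (π : Equiv.Perm (Fin s))
    (hπ : ∀ j : Fin s, (fun i => B i (π j)) = fun i => B i j) :
    ∃ Q : Matrix (Fin s ⊕ Fin k) (Fin s ⊕ Fin k) ℤ,
      (Q.det = 1 ∨ Q.det = -1) ∧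
      H.submatrix (Equiv.sumCongr π (Equiv.refl (Fin k))) id = H * Q :=
  redundant_row_permutation_general s k B T H hH π hπ
end
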